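/- arXiv:2605.22346 — 6 statements merged into one kernel-verified Lean document; each statement's English description precedes it below -/
import Mathlib

section
/- Let n ≥ 2 and let G be a connected simple graph on Fin n (so every vertex has positive degree), with adjacency matrix A, degree function d, and symmetric normalised Laplacian L. Then there exists a real scalar λ > 0 with L = λ • A if and only if either (i) G is regular, i.e. there exists d₀ such that every vertex has degree d₀, or (ii) G is bipartite biregular with distinct part degrees, i.e. there exist nonempty disjoint sets V₁, V₂ whose union is all vertices, and natural numbers d₁ ≠ d₂, such that every edge of G has one endpoint in V₁ and the other in V₂, every vertex in V₁ has degree d₁, and every vertex in V₂ has degree d₂. -/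
open Matrix

/-- The symmetric normalised Laplacian `L = D^{-1/2} * A * D^{-1/2}` of a simple graph. -/
noncomputable def normLaplacian {n : ℕ} (G : SimpleGraph (Fin n)) [DecidableRel G.Adj] :
    Matrix (Fin n) (Fin n) ℝ :=
  Matrix.diagonal (fun i => (Real.sqrt (G.degree i))⁻¹) * G.adjMatrix ℝ *
    Matrix.diagonal (fun i => (Real.sqrt (G.degree i))⁻¹)

/-!
Entrywise, `L = λ • A` says that `(d i * d j)^{-1/2} = λ` on every edge `ij`, so such a `λ > 0`
exists exactly when the product `d i * d j` is the same for all edges. Fix an edge `ab`; on any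
edge, one endpoint of degree `d a` forces the other to have degree `d b` and vice versa, so along
walks from `a` all degrees lie in `{d a, d b}`. By connectedness the graph is then regular
(`d a = d b`) or bipartite with parts `{v | d v = d a}` and `{v | d v = d b}`.
-/

namespace SimpleGraph

section EdgeDegreeProduct

variable {V : Type*} [Fintype V] (G : SimpleGraph V) [DecidableRel G.Adj]

def IsEdgeDegreeProductConstant : Prop :=
  ∀ ⦃i j k l⦄, G.Adj i j → G.Adj k l → G.degree i * G.degree j = G.degree k * G.degree l

/-- The part degrees are required to differ, so regular bipartite graphs are excluded. -/
def IsBipartiteBiregular [DecidableEq V] : Prop :=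
  ∃ (V₁ V₂ : Finset V) (d₁ d₂ : ℕ),
    V₁.Nonempty ∧ V₂.Nonempty ∧ Disjoint V₁ V₂ ∧ V₁ ∪ V₂ = Finset.univ ∧
    d₁ ≠ d₂ ∧
    (∀ i j, G.Adj i j → (i ∈ V₁ ∧ j ∈ V₂) ∨ (i ∈ V₂ ∧ j ∈ V₁)) ∧
    (∀ v ∈ V₁, G.degree v = d₁) ∧ (∀ v ∈ V₂, G.degree v = d₂)

variable {G}

theorem IsRegularOfDegree.isEdgeDegreeProductConstant {d₀ : ℕ} (hd : G.IsRegularOfDegree d₀) :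
    G.IsEdgeDegreeProductConstant := by
  intro i j k l _ _
  simp only [hd.degree_eq]

theorem isEdgeDegreeProductConstant_of_biregular {V₁ V₂ : Finset V} {d₁ d₂ : ℕ}
    (hcross : ∀ i j, G.Adj i j → (i ∈ V₁ ∧ j ∈ V₂) ∨ (i ∈ V₂ ∧ j ∈ V₁))
    (h₁ : ∀ v ∈ V₁, G.degree v = d₁) (h₂ : ∀ v ∈ V₂, G.degree v = d₂) :
    G.IsEdgeDegreeProductConstant := by
  have hprod : ∀ i j, G.Adj i j → G.degree i * G.degree j = d₁ * d₂ := by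
    intro i j hij
    rcases hcross i j hij with ⟨hi, hj⟩ | ⟨hi, hj⟩
    · rw [h₁ i hi, h₂ j hj]
    · rw [h₂ i hi, h₁ j hj, mul_comm]
  intro i j k l hij hkl
  rw [hprod i j hij, hprod k l hkl]

namespace IsEdgeDegreeProductConstant

variable (h : G.IsEdgeDegreeProductConstant) {a b : V} (hab : G.Adj a b)
include h hab

theorem degree_eq_of_adj {i j : V} (hij : G.Adj i j) (hi : G.degree i = G.degree a) :
    G.degree j = G.degree b := by
  have hprod := h hij hab
  rw [hi] at hprod
  exact Nat.eq_of_mul_eq_mul_left ((G.degree_pos_iff_exists_adj a).mpr ⟨b, hab⟩) hprod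

theorem degree_eq_or_degree_eq (hconn : G.Connected) (v : V) :
    G.degree v = G.degree a ∨ G.degree v = G.degree b := by
  suffices ∀ {u w : V}, G.Walk u w → (G.degree u = G.degree a ∨ G.degree u = G.degree b) →
      G.degree w = G.degree a ∨ G.degree w = G.degree b from
    this (hconn.preconnected a v).some (Or.inl rfl)
  intro u w p
  induction p with
  | nil => exact id
  | cons hstep _ ih =>
    rintro (hu | hu)
    · exact ih (Or.inr (h.degree_eq_of_adj hab hstep hu))
    · exact ih (Or.inl (h.degree_eq_of_adj hab.symm hstep hu))

theorem isBipartiteBiregular_of_degree_ne [DecidableEq V] (hconn : G.Connected)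
    (hne : G.degree a ≠ G.degree b) : G.IsBipartiteBiregular := by
  refine ⟨({v | G.degree v = G.degree a} : Finset V), ({v | G.degree v = G.degree b} : Finset V),
    _, _, ⟨a, by simp⟩, ⟨b, by simp⟩, ?_, ?_, hne, ?_, by simp, by simp⟩
  · rw [Finset.disjoint_filter]
    exact fun v _ hva hvb => hne (hva ▸ hvb)
  · ext v
    simpa using h.degree_eq_or_degree_eq hab hconn v
  · intro i j hij
    rcases h.degree_eq_or_degree_eq hab hconn i with hi | hi
    · exact Or.inl ⟨by simpa using hi, by simpa using h.degree_eq_of_adj hab hij hi⟩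
    · exact Or.inr ⟨by simpa using hi, by simpa using h.degree_eq_of_adj hab.symm hij hi⟩

omit hab in
theorem isRegularOfDegree_or_isBipartiteBiregular [DecidableEq V] (hconn : G.Connected) :
    (∃ d₀, G.IsRegularOfDegree d₀) ∨ G.IsBipartiteBiregular := by
  by_cases hedge : ∃ a b, G.Adj a b
  · obtain ⟨a, b, hab⟩ := hedge
    by_cases hne : G.degree a = G.degree b
    · refine Or.inl ⟨G.degree a, fun v => ?_⟩
      rcases h.degree_eq_or_degree_eq hab hconn v with hv | hv
      · exact hv
      · rw [hv, hne]
    · exact Or.inr (h.isBipartiteBiregular_of_degree_ne hab hconn hne)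
  · simp only [not_exists] at hedge
    refine Or.inl ⟨0, fun v => Nat.eq_zero_of_not_pos ?_⟩
    rw [degree_pos_iff_exists_adj]
    exact fun ⟨w, hvw⟩ => hedge v w hvw

end IsEdgeDegreeProductConstant

end EdgeDegreeProduct

section NormLaplacian

variable {n : ℕ} (G : SimpleGraph (Fin n)) [DecidableRel G.Adj]

theorem normLaplacian_apply (i j : Fin n) :
    normLaplacian G i j =
      (Real.sqrt (G.degree i))⁻¹ * G.adjMatrix ℝ i j * (Real.sqrt (G.degree j))⁻¹ := by
  rw [normLaplacian, mul_diagonal, diagonal_mul]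

theorem normLaplacian_eq_smul_adjMatrix_iff (lam : ℝ) :
    normLaplacian G = lam • G.adjMatrix ℝ ↔
      ∀ i j, G.Adj i j → (Real.sqrt (G.degree i * G.degree j))⁻¹ = lam := by
  have hentry : ∀ i j, G.Adj i j →
      normLaplacian G i j = (Real.sqrt (G.degree i * G.degree j))⁻¹ := by
    intro i j hij
    rw [normLaplacian_apply, adjMatrix_apply, if_pos hij, mul_one, ← mul_inv,
      Real.sqrt_mul (Nat.cast_nonneg _)]
  constructor
  · intro hL i j hij
    have hij_entry := congrFun (congrFun hL i) j
    rwa [hentry i j hij, Matrix.smul_apply, adjMatrix_apply, if_pos hij, smul_eq_mul, mul_one]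
      at hij_entry
  · intro hlam
    ext i j
    by_cases hij : G.Adj i j
    · rw [hentry i j hij, hlam i j hij, Matrix.smul_apply, adjMatrix_apply, if_pos hij,
        smul_eq_mul, mul_one]
    · simp [normLaplacian_apply, hij]

theorem exists_pos_normLaplacian_eq_smul_iff :
    (∃ lam : ℝ, 0 < lam ∧ normLaplacian G = lam • G.adjMatrix ℝ) ↔
      G.IsEdgeDegreeProductConstant := by
  simp only [normLaplacian_eq_smul_adjMatrix_iff]
  constructor
  · rintro ⟨lam, -, hlam⟩ i j k l hij hkl
    have hsq := (hlam i j hij).trans (hlam k l hkl).symm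
    rw [_root_.inv_inj, Real.sqrt_inj (by positivity) (by positivity)] at hsq
    exact_mod_cast hsq
  · intro h
    by_cases hedge : ∃ a b, G.Adj a b
    · obtain ⟨a, b, hab⟩ := hedge
      have hpos : 0 < G.degree a * G.degree b :=
        Nat.mul_pos ((G.degree_pos_iff_exists_adj a).mpr ⟨b, hab⟩)
          ((G.degree_pos_iff_exists_adj b).mpr ⟨a, hab.symm⟩)
      refine ⟨(Real.sqrt (G.degree a * G.degree b))⁻¹,
        inv_pos.mpr (Real.sqrt_pos.mpr (by exact_mod_cast hpos)), fun i j hij => ?_⟩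
      exact_mod_cast congrArg (fun m : ℕ => (Real.sqrt m)⁻¹) (h hij hab)
    · simp only [not_exists] at hedge
      exact ⟨1, one_pos, fun i j hij => absurd hij (hedge i j)⟩

end NormLaplacian

end SimpleGraph

open SimpleGraph in
theorem laplacian_scalar_iff_regular_or_bipartiteBiregular_general
    {n : ℕ} (G : SimpleGraph (Fin n)) [DecidableRel G.Adj]
    (hconn : G.Connected) :
    (∃ lam : ℝ, 0 < lam ∧ normLaplacian G = lam • G.adjMatrix ℝ) ↔
      ((∃ d₀ : ℕ, ∀ v, G.degree v = d₀) ∨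
        (∃ (V₁ V₂ : Finset (Fin n)) (d₁ d₂ : ℕ),
          V₁.Nonempty ∧ V₂.Nonempty ∧ Disjoint V₁ V₂ ∧ V₁ ∪ V₂ = Finset.univ ∧
          d₁ ≠ d₂ ∧
          (∀ i j, G.Adj i j → (i ∈ V₁ ∧ j ∈ V₂) ∨ (i ∈ V₂ ∧ j ∈ V₁)) ∧
          (∀ v ∈ V₁, G.degree v = d₁) ∧ (∀ v ∈ V₂, G.degree v = d₂))) := by
  rw [exists_pos_normLaplacian_eq_smul_iff]
  refine ⟨fun h => h.isRegularOfDegree_or_isBipartiteBiregular hconn, ?_⟩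
  rintro (⟨d₀, hd⟩ | ⟨V₁, V₂, d₁, d₂, -, -, -, -, -, hcross, h₁, h₂⟩)
  · exact IsRegularOfDegree.isEdgeDegreeProductConstant hd
  · exact isEdgeDegreeProductConstant_of_biregular hcross h₁ h₂

/-- for a connected simple graph on `Fin n` with `n ≥ 2`, the normalised
Laplacian is a positive scalar multiple of the adjacency matrix if and only if the graph
is regular, or bipartite biregular with distinct part degrees. -/
theorem laplacian_scalar_iff_regular_or_bipartiteBiregular
    {n : ℕ} (hn : 2 ≤ n) (G : SimpleGraph (Fin n)) [DecidableRel G.Adj]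
    (hconn : G.Connected) :
    (∃ lam : ℝ, 0 < lam ∧ normLaplacian G = lam • G.adjMatrix ℝ) ↔
      ((∃ d₀ : ℕ, ∀ v, G.degree v = d₀) ∨
        (∃ (V₁ V₂ : Finset (Fin n)) (d₁ d₂ : ℕ),
          V₁.Nonempty ∧ V₂.Nonempty ∧ Disjoint V₁ V₂ ∧ V₁ ∪ V₂ = Finset.univ ∧
          d₁ ≠ d₂ ∧
          (∀ i j, G.Adj i j → (i ∈ V₁ ∧ j ∈ V₂) ∨ (i ∈ V₂ ∧ j ∈ V₁)) ∧
          (∀ v ∈ V₁, G.degree v = d₁) ∧ (∀ v ∈ V₂, G.degree v = d₂))) :=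
  laplacian_scalar_iff_regular_or_bipartiteBiregular_general G hconn
end

section
/- Let G be a connected simple graph on Fin n with n ≥ 2, and suppose there is a constant c > 0 such that (d i : ℝ) * (d j : ℝ) = c for every edge (i, j) of G (the product-degree condition). Then G has at most two distinct degree values: the image of the degree function on the vertex set has cardinality at most 2. -/
/-!
Crossing an edge replaces a degree `d` by `c / d`, and `d ↦ c / d` is an involution, so along
any walk from a fixed vertex `v₀` the degree only takes the values `d v₀` and `c / d v₀`.
-/

section

variable {K : Type*} [CommGroupWithZero K] {a c x y : K}

lemma eq_div_or_eq_of_mul_eq (hc : c ≠ 0) (hxy : x * y = c) :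
    x = a ∨ x = c / a → y = c / a ∨ y = a := by
  have hx : x ≠ 0 := left_ne_zero_of_mul (hxy ▸ hc)
  rintro (rfl | rfl)
  · exact Or.inl (eq_div_of_mul_eq hx (by rw [mul_comm, hxy]))
  · have ha : a ≠ 0 := by rintro rfl; simp at hx
    exact Or.inr (by rwa [div_mul_eq_mul_div, div_eq_iff ha, mul_right_inj' hc] at hxy)

end

namespace SimpleGraph

variable {V K : Type*} [CommGroupWithZero K] {G : SimpleGraph V} {f : V → K} {c : K}

lemma Reachable.eq_or_eq_div_of_mul_eq (hc : c ≠ 0) (hf : ∀ u w, G.Adj u w → f u * f w = c)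
    {u v : V} (huv : G.Reachable u v) : f v = f u ∨ f v = c / f u := by
  obtain ⟨p⟩ := huv
  suffices ∀ {x y : V}, G.Walk x y → f x = f u ∨ f x = c / f u → f y = f u ∨ f y = c / f u from
    this p (Or.inl rfl)
  intro x y q
  induction q with
  | nil => exact id
  | cons hadj _ ih => exact fun hx => ih ((eq_div_or_eq_of_mul_eq hc (hf _ _ hadj) hx).symm)

end SimpleGraph

theorem productDegree_atMostTwoDegrees_general
    {n : ℕ} (G : SimpleGraph (Fin n)) [DecidableRel G.Adj]
    (hconn : G.Connected) (c : ℝ) (hc : 0 < c)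
    (hprod : ∀ i j, G.Adj i j → (G.degree i : ℝ) * (G.degree j : ℝ) = c) :
    (Finset.univ.image (fun v => G.degree v)).card ≤ 2 := by
  obtain ⟨v₀⟩ := hconn.nonempty
  have hsub : Finset.univ.image (fun v => (G.degree v : ℝ)) ⊆
      {(G.degree v₀ : ℝ), c / G.degree v₀} := by
    intro x hx
    obtain ⟨v, -, rfl⟩ := Finset.mem_image.mp hx
    simpa using (hconn v₀ v).eq_or_eq_div_of_mul_eq hc.ne' hprod
  calc (Finset.univ.image fun v => G.degree v).card
      = ((Finset.univ.image fun v => G.degree v).image (Nat.cast : ℕ → ℝ)).card :=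
        (Finset.card_image_of_injective _ Nat.cast_injective).symm
    _ ≤ 2 := by
      rw [Finset.image_image]
      exact (Finset.card_le_card hsub).trans Finset.card_le_two

/-- a connected simple graph on `Fin n` (`n ≥ 2`) satisfying the
product-degree condition with constant `c > 0` has at most two distinct degree values. -/
theorem productDegree_atMostTwoDegrees
    {n : ℕ} (hn : 2 ≤ n) (G : SimpleGraph (Fin n)) [DecidableRel G.Adj]
    (hconn : G.Connected) (c : ℝ) (hc : 0 < c)
    (hprod : ∀ i j, G.Adj i j → (G.degree i : ℝ) * (G.degree j : ℝ) = c) :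
    (Finset.univ.image (fun v => G.degree v)).card ≤ 2 :=
  productDegree_atMostTwoDegrees_general G hconn c hc hprod
end

section
/- Let G be a connected simple graph on Fin n with n ≥ 2, satisfying the product-degree condition with constant c > 0, and suppose G has exactly two distinct degree values d₁ < d₂. Then G is bipartite biregular: with V₁ = {v : d v = d₁} and V₂ = {v : d v = d₂}, the sets V₁ and V₂ are nonempty and disjoint, their union is all vertices, no edge of G has both endpoints in V₁, no edge has both endpoints in V₂, and hence every edge joins V₁ to V₂. -/
/-- a connected graph on `Fin n` (`n ≥ 2`) satisfying the product-degree
condition with constant `c > 0` and having exactly two distinct degree values `d₁ < d₂`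
is bipartite biregular with parts `V₁ = {v : deg v = d₁}` and `V₂ = {v : deg v = d₂}`. -/
theorem productDegree_twoDegrees_bipartiteBiregular
    {n : ℕ} (hn : 2 ≤ n) (G : SimpleGraph (Fin n)) [DecidableRel G.Adj]
    (hconn : G.Connected) (c : ℝ) (hc : 0 < c)
    (hprod : ∀ i j, G.Adj i j → (G.degree i : ℝ) * (G.degree j : ℝ) = c)
    (d₁ d₂ : ℕ) (hlt : d₁ < d₂)
    (hdegs : Finset.univ.image (fun v => G.degree v) = {d₁, d₂}) :
    (Finset.univ.filter (fun v => G.degree v = d₁)).Nonempty ∧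
    (Finset.univ.filter (fun v => G.degree v = d₂)).Nonempty ∧
    Disjoint (Finset.univ.filter (fun v => G.degree v = d₁))
      (Finset.univ.filter (fun v => G.degree v = d₂)) ∧
    (Finset.univ.filter (fun v => G.degree v = d₁)) ∪
      (Finset.univ.filter (fun v => G.degree v = d₂)) = Finset.univ ∧
    (∀ i j, G.Adj i j → ¬(G.degree i = d₁ ∧ G.degree j = d₁)) ∧
    (∀ i j, G.Adj i j → ¬(G.degree i = d₂ ∧ G.degree j = d₂)) ∧
    (∀ i j, G.Adj i j →
      (G.degree i = d₁ ∧ G.degree j = d₂) ∨ (G.degree i = d₂ ∧ G.degree j = d₁)) := by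
  -- each vertex has a neighbor
  have hadj : ∀ v : Fin n, ∃ w, G.Adj v w := by
    intro v
    have hcard : 1 < Fintype.card (Fin n) := by simpa using (by omega : 1 < n)
    obtain ⟨w, hw⟩ := Fintype.exists_ne_of_one_lt_card hcard v
    obtain ⟨p⟩ := hconn v w
    cases p with
    | nil => exact absurd rfl hw
    | cons h _ => exact ⟨_, h⟩
  -- degrees are d₁ or d₂
  have hmem : ∀ v, G.degree v = d₁ ∨ G.degree v = d₂ := by
    intro v
    have : G.degree v ∈ ({d₁, d₂} : Finset ℕ) := by
      rw [← hdegs]; exact Finset.mem_image_of_mem _ (Finset.mem_univ v)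
    simpa using this
  -- existence of vertices of each degree
  have hex : ∀ d ∈ ({d₁, d₂} : Finset ℕ), ∃ v, G.degree v = d := by
    intro d hd
    rw [← hdegs] at hd
    obtain ⟨v, _, hv⟩ := Finset.mem_image.mp hd
    exact ⟨v, hv⟩
  obtain ⟨u₁, hu₁⟩ := hex d₁ (by simp)
  obtain ⟨u₂, hu₂⟩ := hex d₂ (by simp)
  -- c = d₁ * d₂
  have hcval : c = (d₁ : ℝ) * d₂ := by
    obtain ⟨w₁, hw₁⟩ := hadj u₁
    obtain ⟨w₂, hw₂⟩ := hadj u₂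
    have h1 := hprod u₁ w₁ hw₁
    have h2 := hprod u₂ w₂ hw₂
    rw [hu₁] at h1; rw [hu₂] at h2
    have hltR : (d₁ : ℝ) < d₂ := by exact_mod_cast hlt
    have hnn : (0 : ℝ) ≤ d₁ := Nat.cast_nonneg d₁
    rcases hmem w₁ with e1 | e1
    · rw [e1] at h1
      -- h1 : d₁ * d₁ = c
      rcases hmem w₂ with e2 | e2 <;> rw [e2] at h2
      · exfalso; nlinarith
      · exfalso; nlinarith
    · rw [e1] at h1; exact h1.symm
  -- main edge classification
  have hedge : ∀ i j, G.Adj i j →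
      (G.degree i = d₁ ∧ G.degree j = d₂) ∨ (G.degree i = d₂ ∧ G.degree j = d₁) := by
    intro i j hij
    have h := hprod i j hij
    rw [hcval] at h
    have hd1pos : 0 < d₁ := by
      rcases Nat.eq_zero_or_pos d₁ with h0 | h0
      · exfalso; rw [hcval, h0] at hc; simp at hc
      · exact h0
    rcases hmem i with e1 | e1 <;> rcases hmem j with e2 | e2 <;> rw [e1, e2] at h
    · exfalso
      have : d₁ * d₁ = d₁ * d₂ := by exact_mod_cast h
      have : d₁ = d₂ := Nat.eq_of_mul_eq_mul_left hd1pos this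
      omega
    · exact Or.inl ⟨e1, e2⟩
    · exact Or.inr ⟨e1, e2⟩
    · exfalso
      have : d₂ * d₂ = d₁ * d₂ := by exact_mod_cast h
      nlinarith
  refine ⟨⟨u₁, by simp [hu₁]⟩, ⟨u₂, by simp [hu₂]⟩, ?_, ?_, ?_, ?_, hedge⟩
  · rw [Finset.disjoint_filter]
    intro v _ h1 h2; omega
  · ext v; simp only [Finset.mem_union, Finset.mem_filter, Finset.mem_univ, true_and]
    exact iff_of_true (hmem v) trivial
  · intro i j hij ⟨h1, h2⟩
    rcases hedge i j hij with ⟨a, b⟩ | ⟨a, b⟩ <;> omega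
  · intro i j hij ⟨h1, h2⟩
    rcases hedge i j hij with ⟨a, b⟩ | ⟨a, b⟩ <;> omega
end

section
/- Let G be a simple graph on Fin n in which every vertex has positive degree, with adjacency matrix A and mean degree d̄, let Δ be the diagonal matrix with entries Δ i i = √(d̄ / d i) − 1, and let α = max(√(d̄ / d_min) − 1, 1 − √(d̄ / d_max)). Then the three cross-terms satisfy ‖Δ * A‖_F ≤ α * √(n * d̄), ‖A * Δ‖_F ≤ α * √(n * d̄), and ‖Δ * A * Δ‖_F ≤ α² * √(n * d̄). -/
open Matrix Finset

/-! Scaling the rows or columns of a matrix by factors of absolute value at most `c` scales its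
Frobenius norm by at most `c`, and every diagonal entry of `Δ` has absolute value at most `α`
because `dmin ≤ dᵢ ≤ dmax`. The three bounds then follow from
`‖A‖_F² = Σᵢⱼ Aᵢⱼ² = Σᵢ dᵢ = n d̄`. -/

/-- The Frobenius norm `‖M‖_F = √(Σᵢⱼ Mᵢⱼ²)` of a real matrix. -/
noncomputable def frobNorm {n : ℕ} (M : Matrix (Fin n) (Fin n) ℝ) : ℝ :=
  Real.sqrt (∑ i, ∑ j, (M i j) ^ 2)

section

variable {n : ℕ}

lemma frobNorm_le_of_abs_le {M N : Matrix (Fin n) (Fin n) ℝ} {c : ℝ} (hc : 0 ≤ c)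
    (h : ∀ i j, |M i j| ≤ c * |N i j|) : frobNorm M ≤ c * frobNorm N := by
  unfold frobNorm
  rw [← Real.sqrt_sq hc, ← Real.sqrt_mul (sq_nonneg c), mul_sum]
  gcongr with i _
  rw [mul_sum]
  gcongr with j _
  rw [← mul_pow, sq_le_sq, abs_mul, abs_of_nonneg hc]
  exact h i j

lemma frobNorm_diagonal_mul_le {d : Fin n → ℝ} {c : ℝ} (hc : 0 ≤ c)
    (hd : ∀ i, |d i| ≤ c) (M : Matrix (Fin n) (Fin n) ℝ) :
    frobNorm (diagonal d * M) ≤ c * frobNorm M :=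
  frobNorm_le_of_abs_le hc fun i j => by
    rw [diagonal_mul, abs_mul]
    exact mul_le_mul_of_nonneg_right (hd i) (abs_nonneg _)

lemma frobNorm_mul_diagonal_le {d : Fin n → ℝ} {c : ℝ} (hc : 0 ≤ c)
    (hd : ∀ i, |d i| ≤ c) (M : Matrix (Fin n) (Fin n) ℝ) :
    frobNorm (M * diagonal d) ≤ c * frobNorm M :=
  frobNorm_le_of_abs_le hc fun i j => by
    rw [mul_diagonal, abs_mul, mul_comm c]
    exact mul_le_mul_of_nonneg_left (hd j) (abs_nonneg _)

lemma frobNorm_adjMatrix (G : SimpleGraph (Fin n)) [DecidableRel G.Adj] :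
    frobNorm (G.adjMatrix ℝ) = √(∑ i, (G.degree i : ℝ)) := by
  unfold frobNorm
  congr 1
  refine sum_congr rfl fun i _ => ?_
  simp [SimpleGraph.adjMatrix_apply, apply_ite (· ^ 2 : ℝ → ℝ), sum_boole,
    SimpleGraph.degree, SimpleGraph.neighborFinset_eq_filter]

end

lemma abs_sqrt_div_sub_one_le {b m x M : ℝ} (hb : 0 ≤ b) (hm : 0 < m) (hmx : m ≤ x)
    (hxM : x ≤ M) : |√(b / x) - 1| ≤ max (√(b / m) - 1) (1 - √(b / M)) := by
  have hup : √(b / x) ≤ √(b / m) := Real.sqrt_le_sqrt (div_le_div_of_nonneg_left hb hm hmx)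
  have hlow : √(b / M) ≤ √(b / x) :=
    Real.sqrt_le_sqrt (div_le_div_of_nonneg_left hb (hm.trans_le hmx) hxM)
  rw [abs_le]
  constructor <;> linarith [le_max_left (√(b / m) - 1) (1 - √(b / M)),
    le_max_right (√(b / m) - 1) (1 - √(b / M))]

/-- the three cross-terms satisfy `‖ΔA‖_F ≤ α √(n d̄)`,
`‖AΔ‖_F ≤ α √(n d̄)` and `‖ΔAΔ‖_F ≤ α² √(n d̄)`. -/
theorem crossTerm_bounds
    {n : ℕ} (hn : 1 ≤ n) (G : SimpleGraph (Fin n)) [DecidableRel G.Adj]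
    (hdeg : ∀ v, 0 < G.degree v) :
    letI hne : (Finset.univ : Finset (Fin n)).Nonempty :=
      Finset.univ_nonempty_iff.mpr (Fin.pos_iff_nonempty.mp (by omega))
    let A : Matrix (Fin n) (Fin n) ℝ := G.adjMatrix ℝ
    let dbar : ℝ := (∑ i, (G.degree i : ℝ)) / n
    let Δ : Matrix (Fin n) (Fin n) ℝ :=
      Matrix.diagonal (fun i => Real.sqrt (dbar / (G.degree i : ℝ)) - 1)
    let dmin : ℕ := Finset.univ.inf' hne (fun v => G.degree v)
    let dmax : ℕ := Finset.univ.sup' hne (fun v => G.degree v)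
    let α : ℝ := max (Real.sqrt (dbar / (dmin : ℝ)) - 1) (1 - Real.sqrt (dbar / (dmax : ℝ)))
    frobNorm (Δ * A) ≤ α * Real.sqrt (n * dbar) ∧
      frobNorm (A * Δ) ≤ α * Real.sqrt (n * dbar) ∧
      frobNorm (Δ * A * Δ) ≤ α ^ 2 * Real.sqrt (n * dbar) := by
  intro A dbar Δ dmin dmax α
  have hΔ : ∀ i, |√(dbar / G.degree i) - 1| ≤ α := fun i =>
    abs_sqrt_div_sub_one_le (by positivity)
      (Nat.cast_pos.mpr ((lt_inf'_iff _).mpr fun v _ => hdeg v))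
      (Nat.cast_le.mpr (inf'_le _ (mem_univ i)))
      (Nat.cast_le.mpr (le_sup' (fun v => G.degree v) (mem_univ i)))
  have hα : 0 ≤ α := (abs_nonneg _).trans (hΔ ⟨0, hn⟩)
  have hA : frobNorm A = √(n * dbar) := by
    rw [frobNorm_adjMatrix, mul_div_cancel₀ _ (by positivity)]
  refine ⟨?_, ?_, ?_⟩
  · exact hA ▸ frobNorm_diagonal_mul_le hα hΔ A
  · exact hA ▸ frobNorm_mul_diagonal_le hα hΔ A
  · calc frobNorm (Δ * A * Δ) ≤ α * frobNorm (Δ * A) := frobNorm_mul_diagonal_le hα hΔ _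
      _ ≤ α * (α * frobNorm A) := by gcongr; exact frobNorm_diagonal_mul_le hα hΔ A
      _ = α ^ 2 * √(n * dbar) := by rw [hA]; ring
end

section
/- Let G be a simple graph on Fin n with n ≥ 1, adjacency matrix A, mean degree d̄, and degree variance σ_d² = (1/n) * Σ i, ((d i : ℝ) − d̄)². With P₁ = (1/n) • (𝟙 𝟙ᵀ) and P⊥ = I − P₁, the off-diagonal block satisfies ‖P₁ * A * P⊥‖_F² = σ_d², and likewise ‖P⊥ * A * P₁‖_F² = σ_d². -/
/-!
Since `𝟙ᵀ A = dᵀ`, every row of `P₁ A` is `dᵀ / n`, and multiplying a row on the right by `P⊥`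
subtracts its mean; so every row of `P₁ A P⊥` is `(d - d̄ 𝟙)ᵀ / n`, and its squared Frobenius norm
is `n · ‖d - d̄ 𝟙‖² / n² = σ_d²`. As `P₁`, `A` and `P⊥` are symmetric, `P⊥ A P₁` is the transpose
of `P₁ A P⊥` and has the same norm.
-/

open Matrix

theorem SimpleGraph.sum_adjMatrix_apply_left {V α : Type*} [Fintype V] (G : SimpleGraph V)
    [DecidableRel G.Adj] [NonAssocSemiring α] (w : V) :
    ∑ v, G.adjMatrix α v w = G.degree w := by
  simp [adjMatrix_apply, G.adj_comm _ w, Finset.sum_boole, degree, neighborFinset_eq_filter]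

namespace Matrix

variable {ι K : Type*}

theorem smul_of_one_mul_apply [Fintype ι] [NonAssocSemiring K] (c : K) (M : Matrix ι ι K)
    (i j : ι) : ((c • of fun _ _ => (1 : K) : Matrix ι ι K) * M) i j = c * ∑ k, M k j := by
  simp [mul_apply, Finset.mul_sum]

theorem mul_one_sub_smul_of_one_apply [Fintype ι] [DecidableEq ι] [Ring K] (c : K)
    (M : Matrix ι ι K) (i j : ι) :
    (M * (1 - c • of fun _ _ => (1 : K) : Matrix ι ι K)) i j = M i j - (∑ k, M i k) * c := by
  rw [Matrix.mul_sub, Matrix.mul_one, sub_apply]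
  simp [mul_apply, Finset.sum_mul]

theorem transpose_smul_of_one [SMul K K] [One K] (c : K) :
    (c • of fun _ _ => (1 : K) : Matrix ι ι K)ᵀ = c • of fun _ _ => (1 : K) := by
  ext; simp

end Matrix

theorem frobNorm_sq {n : ℕ} (M : Matrix (Fin n) (Fin n) ℝ) :
    frobNorm M ^ 2 = ∑ i, ∑ j, M i j ^ 2 :=
  Real.sq_sqrt (by positivity)

theorem frobNorm_transpose {n : ℕ} (M : Matrix (Fin n) (Fin n) ℝ) : frobNorm Mᵀ = frobNorm M := by
  rw [frobNorm, frobNorm, Finset.sum_comm]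
  rfl

theorem frobNorm_sq_of_apply_eq {n : ℕ} {M : Matrix (Fin n) (Fin n) ℝ} {f : Fin n → ℝ}
    (h : ∀ i j, M i j = f j) : frobNorm M ^ 2 = n * ∑ j, f j ^ 2 := by
  simp [frobNorm_sq, h]

theorem offDiagonal_block_norm_general
    {n : ℕ} (G : SimpleGraph (Fin n)) [DecidableRel G.Adj] :
    let A : Matrix (Fin n) (Fin n) ℝ := G.adjMatrix ℝ
    let dbar : ℝ := (∑ i, (G.degree i : ℝ)) / n
    let σd2 : ℝ := (1 / (n : ℝ)) * ∑ i, ((G.degree i : ℝ) - dbar) ^ 2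
    let J : Matrix (Fin n) (Fin n) ℝ := Matrix.of (fun _ _ => (1 : ℝ))
    let P₁ : Matrix (Fin n) (Fin n) ℝ := ((n : ℝ)⁻¹) • J
    let Pperp : Matrix (Fin n) (Fin n) ℝ := 1 - P₁
    frobNorm (P₁ * A * Pperp) ^ 2 = σd2 ∧ frobNorm (Pperp * A * P₁) ^ 2 = σd2 := by
  intro A dbar σd2 J P₁ Pperp
  have hentry (i j : Fin n) : (P₁ * A * Pperp) i j = (n : ℝ)⁻¹ * (G.degree j - dbar) := by
    simp only [Pperp, P₁, J, mul_one_sub_smul_of_one_apply, smul_of_one_mul_apply, A,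
      G.sum_adjMatrix_apply_left, ← Finset.mul_sum, dbar]
    ring
  have hfirst : frobNorm (P₁ * A * Pperp) ^ 2 = σd2 := by
    rw [frobNorm_sq_of_apply_eq hentry]
    simp only [mul_pow, ← Finset.mul_sum, σd2]
    rcases eq_or_ne (n : ℝ) 0 with hn | hn
    · simp [hn]
    · field_simp
  have hP₁ : P₁ᵀ = P₁ := transpose_smul_of_one _
  have hsymm : (Pperp * A * P₁)ᵀ = P₁ * A * Pperp := by
    rw [transpose_mul, transpose_mul, transpose_sub, transpose_one, hP₁, G.transpose_adjMatrix,
      Matrix.mul_assoc]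
  exact ⟨hfirst, by rw [← frobNorm_transpose, hsymm, hfirst]⟩

/-- the squared Frobenius norms of the off-diagonal blocks
`P₁ A P⊥` and `P⊥ A P₁` both equal the degree variance `σ_d²`. -/
theorem offDiagonal_block_norm
    {n : ℕ} (hn : 1 ≤ n) (G : SimpleGraph (Fin n)) [DecidableRel G.Adj] :
    let A : Matrix (Fin n) (Fin n) ℝ := G.adjMatrix ℝ
    let dbar : ℝ := (∑ i, (G.degree i : ℝ)) / n
    let σd2 : ℝ := (1 / (n : ℝ)) * ∑ i, ((G.degree i : ℝ) - dbar) ^ 2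
    let J : Matrix (Fin n) (Fin n) ℝ := Matrix.of (fun _ _ => (1 : ℝ))
    let P₁ : Matrix (Fin n) (Fin n) ℝ := ((n : ℝ)⁻¹) • J
    let Pperp : Matrix (Fin n) (Fin n) ℝ := 1 - P₁
    frobNorm (P₁ * A * Pperp) ^ 2 = σd2 ∧ frobNorm (Pperp * A * P₁) ^ 2 = σd2 :=
  offDiagonal_block_norm_general G
end

section
/- Let n ≥ 4 and let G_n = Tad(3, n−3) be the tadpole graph on Fin n: vertices 0, 1, 2 form a triangle, and vertices 2, 3, 4, …, n−1 form a path (edges {0,1}, {0,2}, {1,2}, and {k, k+1} for 2 ≤ k ≤ n−2). Then the adjacency matrix of G_n, which is real symmetric, has an eigenvalue μ with μ ≥ 28/13; in particular its largest eigenvalue is strictly greater than 2. -/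
/-!
The test vector `v = (2, 2, 2, 1, 0, …, 0)` is supported on the paw `{0, 1, 2, 3}` (the triangle
with one pendant path vertex), so its Rayleigh quotient is computed in the `4 × 4` principal
submatrix: `vᵀ A v = 28` and `vᵀ v = 13`. The largest eigenvalue of a real symmetric matrix
dominates every Rayleigh quotient, so it is at least `28 / 13 > 2`.
-/

open Matrix

/-- The tadpole graph `Tad(3, n−3)` on `Fin n`: vertices `0, 1, 2` form a triangle and
`2, 3, …, n−1` form a path. -/
def tadpole (n : ℕ) : SimpleGraph (Fin n) :=
  SimpleGraph.fromRel (fun i j =>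
    (i.val = 0 ∧ j.val = 1) ∨ (i.val = 0 ∧ j.val = 2) ∨ (i.val = 1 ∧ j.val = 2) ∨
      (2 ≤ i.val ∧ j.val = i.val + 1))

/-- The adjacency matrix over `ℝ` of the tadpole graph. -/
noncomputable def tadAdj (n : ℕ) : Matrix (Fin n) (Fin n) ℝ :=
  letI : DecidableRel (tadpole n).Adj := Classical.decRel _
  (tadpole n).adjMatrix ℝ

lemma tadAdj_isHermitian (n : ℕ) : (tadAdj n).IsHermitian := by
  letI : DecidableRel (tadpole n).Adj := Classical.decRel _
  show ((tadpole n).adjMatrix ℝ).IsHermitian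
  rw [Matrix.IsHermitian, Matrix.conjTranspose_eq_transpose_of_trivial]
  exact SimpleGraph.isSymm_adjMatrix _

namespace Matrix

variable {ι κ R : Type*} [Fintype ι] [Fintype κ]

theorem dotProduct_extend_zero [NonUnitalNonAssocSemiring R] {e : ι → κ}
    (he : Function.Injective e) (u : κ → R) (w : ι → R) :
    u ⬝ᵥ Function.extend e w 0 = (u ∘ e) ⬝ᵥ w := by
  classical
  have hsupp : ∀ k ∉ Finset.univ.image e, u k * Function.extend e w 0 k = 0 := fun k hk => by
    rw [Function.extend_apply' _ _ _ (by simpa using hk), Pi.zero_apply, mul_zero]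
  rw [dotProduct, ← Finset.sum_subset (Finset.subset_univ _) (fun k _ hk => hsupp k hk),
    Finset.sum_image he.injOn]
  simp only [he.extend_apply, dotProduct, Function.comp_apply]

theorem extend_zero_dotProduct_mulVec [CommSemiring R] {e : ι → κ} (he : Function.Injective e)
    (A : Matrix κ κ R) (w : ι → R) :
    Function.extend e w 0 ⬝ᵥ A *ᵥ Function.extend e w 0 = w ⬝ᵥ A.submatrix e e *ᵥ w := by
  rw [dotProduct_comm, dotProduct_extend_zero he, dotProduct_comm]
  congr 1
  ext i
  exact dotProduct_extend_zero he _ w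

open scoped MatrixOrder in
theorem IsHermitian.dotProduct_mulVec_le_of_eigenvalues_le [DecidableEq ι] {A : Matrix ι ι ℝ}
    (hA : A.IsHermitian) {c : ℝ} (hc : ∀ i, hA.eigenvalues i ≤ c) (v : ι → ℝ) :
    v ⬝ᵥ A *ᵥ v ≤ c * (v ⬝ᵥ v) := by
  have hle : A ≤ algebraMap ℝ _ c := by
    rw [le_algebraMap_iff_spectrum_le hA.isSelfAdjoint, hA.spectrum_real_eq_range_eigenvalues]
    rintro _ ⟨i, rfl⟩
    exact hc i
  have := (le_iff.mp hle).dotProduct_mulVec_nonneg v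
  rwa [Algebra.algebraMap_eq_smul_one, sub_mulVec, smul_mulVec, one_mulVec, dotProduct_sub,
    dotProduct_smul, smul_eq_mul, star_trivial, sub_nonneg] at this

theorem IsHermitian.exists_mulVec_eq_smul_eigenvalues [DecidableEq ι] {A : Matrix ι ι ℝ}
    (hA : A.IsHermitian) (i : ι) : ∃ v : ι → ℝ, v ≠ 0 ∧ A *ᵥ v = hA.eigenvalues i • v :=
  ⟨_, fun h => hA.eigenvectorBasis.toBasis.ne_zero i (by simpa using h),
    hA.mulVec_eigenvectorBasis i⟩

end Matrix

theorem tadAdj_apply {n : ℕ} (i j : Fin n) [Decidable ((tadpole n).Adj i j)] :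
    tadAdj n i j = if (tadpole n).Adj i j then 1 else 0 := by
  unfold tadAdj
  convert SimpleGraph.adjMatrix_apply ..

theorem tadAdj_submatrix_castLE {n : ℕ} (hn : 4 ≤ n) :
    (tadAdj n).submatrix (Fin.castLE hn) (Fin.castLE hn) =
      !![0, 1, 1, 0; 1, 0, 1, 0; 1, 1, 0, 1; 0, 0, 1, 0] := by
  ext i j
  fin_cases i <;> fin_cases j <;> classical simp [tadAdj_apply, tadpole]

/-- for `n ≥ 4`, the (real symmetric) adjacency matrix of the tadpole
graph `Tad(3, n−3)` has an eigenvalue `μ ≥ 28/13`; in particular its largest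
eigenvalue is strictly greater than `2`. -/
theorem tadpole_spectralRadius_lower_bound
    {n : ℕ} (hn : 4 ≤ n) :
    letI : Nonempty (Fin n) := ⟨⟨0, by omega⟩⟩
    (∃ μ : ℝ, (28 : ℝ) / 13 ≤ μ ∧
        ∃ v : Fin n → ℝ, v ≠ 0 ∧ (tadAdj n).mulVec v = μ • v) ∧
      2 < Finset.univ.sup' Finset.univ_nonempty (tadAdj_isHermitian n).eigenvalues := by
  have : Nonempty (Fin n) := ⟨⟨0, by omega⟩⟩
  set hA := tadAdj_isHermitian n
  obtain ⟨i, -, hi⟩ := Finset.exists_mem_eq_sup' Finset.univ_nonempty hA.eigenvalues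
  have he := Fin.castLE_injective hn
  set v := Function.extend (Fin.castLE hn) ![(2 : ℝ), 2, 2, 1] 0 with hv
  have hvAv : v ⬝ᵥ tadAdj n *ᵥ v = 28 := by
    rw [extend_zero_dotProduct_mulVec he, tadAdj_submatrix_castLE]
    simp only [dotProduct, mulVec, of_apply, cons_val', cons_val_fin_one, Fin.sum_univ_four,
      cons_val_zero, cons_val_one, cons_val]
    norm_num
  have hvv : v ⬝ᵥ v = 13 := by
    rw [dotProduct_extend_zero he, hv, Function.extend_comp he]
    simp only [dotProduct, Fin.sum_univ_four, cons_val_zero, cons_val_one, cons_val]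
    norm_num
  have hi_ge : 28 / 13 ≤ hA.eigenvalues i := by
    have := hA.dotProduct_mulVec_le_of_eigenvalues_le
      (fun j => hi ▸ Finset.le_sup' hA.eigenvalues (Finset.mem_univ j)) v
    rw [hvAv, hvv] at this
    linarith
  exact ⟨⟨_, hi_ge, hA.exists_mulVec_eq_smul_eigenvalues i⟩, by rw [hi]; linarith⟩
end
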